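/- Fix d ≥ 2 and δ ∈ (0,1). Let {v_1, …, v_n} be a δ-net of S^{d-1}, for each j let P_j = {x ∈ ℝ^d : ‖x‖ ≤ 1, x·v_j > 1 − δ²/8} with common volume V = Vol(P_1), let K_0 = B_d \ ∪_{j=1}^n P_j, and for y ∈ {0,1}^n let K_y = K_0 ∪ ∪_{j : y_j = 1} P_j. Let Γ_d = Vol(B_d), let ε > 0 satisfy n·V ≥ 8ε·Γ_d, let x ∈ {0,1}^n, and let K̃ ⊆ ℝ^d be a Borel set with Vol(K̃ Δ K_x) ≤ ε·Γ_d. If z ∈ {0,1}^n minimizes Vol(K̃ Δ K_y) over all y ∈ {0,1}^n, then the Hamming distance satisfies |x ⊕ z| ≤ n/4. -/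
import Mathlib


open Metric Set MeasureTheory
open scoped RealInnerProductSpace symmDiff ENNReal

noncomputable section

/-- `N` is a `δ`-net of `S`. -/
def IsNet {d : ℕ} (δ : ℝ) (N S : Set (EuclideanSpace ℝ (Fin d))) : Prop :=
  N ⊆ S ∧ (∀ v ∈ N, ∀ w ∈ N, v ≠ w → δ ≤ dist v w) ∧ ∀ v ∈ S, ∃ w ∈ N, dist v w ≤ δ

/-- The spherical cap of radius `δ/2` around `v`: `{x : ‖x‖ ≤ 1, ⟪x, v⟫ > 1 - δ²/8}`. -/
def cap {d : ℕ} (δ : ℝ) (v : EuclideanSpace ℝ (Fin d)) : Set (EuclideanSpace ℝ (Fin d)) :=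
  {x | ‖x‖ ≤ 1 ∧ 1 - δ ^ 2 / 8 < ⟪x, v⟫}

/-- The unit ball with all the caps removed. -/
def capBase {d n : ℕ} (δ : ℝ) (v : Fin n → EuclideanSpace ℝ (Fin d)) :
    Set (EuclideanSpace ℝ (Fin d)) :=
  closedBall 0 1 \ ⋃ j, cap δ (v j)

/-- The convex body `K_y` associated to a bitstring `y`. -/
def capBody {d n : ℕ} (δ : ℝ) (v : Fin n → EuclideanSpace ℝ (Fin d)) (y : Fin n → Bool) :
    Set (EuclideanSpace ℝ (Fin d)) :=
  capBase δ v ∪ ⋃ j ∈ {j | y j = true}, cap δ (v j)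

lemma cap_subset_ball' {d : ℕ} (δ : ℝ) (w : EuclideanSpace ℝ (Fin d)) :
    cap δ w ⊆ closedBall 0 1 := fun x hx => by
  simpa [mem_closedBall, dist_zero_right] using hx.1

lemma measurableSet_cap' {d : ℕ} (δ : ℝ) (w : EuclideanSpace ℝ (Fin d)) :
    MeasurableSet (cap δ w) := by
  have h1 : MeasurableSet {x : EuclideanSpace ℝ (Fin d) | ‖x‖ ≤ 1} :=
    (isClosed_le continuous_norm continuous_const).measurableSet
  have h2 : MeasurableSet {x : EuclideanSpace ℝ (Fin d) | 1 - δ ^ 2 / 8 < ⟪x, w⟫} :=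
    (isOpen_lt continuous_const (Continuous.inner continuous_id continuous_const)).measurableSet
  rw [cap, setOf_and]
  exact h1.inter h2

/-- A point in the cap around a unit vector `w` is within `δ/2` of `w`. -/
lemma cap_close {d : ℕ} {δ : ℝ} (hδ0 : 0 < δ) {w : EuclideanSpace ℝ (Fin d)}
    (hw : ‖w‖ = 1) {x : EuclideanSpace ℝ (Fin d)} (hx : x ∈ cap δ w) :
    ‖x - w‖ < δ / 2 := by
  obtain ⟨h1, h2⟩ := hx
  have hsq : ‖x - w‖ ^ 2 < (δ / 2) ^ 2 := by
    have := norm_sub_sq_real x w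
    rw [this, hw]
    nlinarith [norm_nonneg x]
  exact lt_of_pow_lt_pow_left₀ 2 (le_of_lt (half_pos hδ0)) hsq

/-- If `n·V ≥ 8ε·Γ_d`, `Vol(K̃ Δ K_x) ≤ ε·Γ_d`, and `z` minimizes `Vol(K̃ Δ K_y)` over all
bitstrings `y`, then the Hamming distance between `x` and `z` is at most `n/4`. -/
theorem set_estimation_decodes_bitstring (d : ℕ) (hd : 2 ≤ d)
    (δ : ℝ) (hδ0 : 0 < δ) (hδ1 : δ < 1)
    (n : ℕ) (v : Fin n → EuclideanSpace ℝ (Fin d)) (hinj : Function.Injective v)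
    (hnet : IsNet δ (Set.range v) (sphere (0 : EuclideanSpace ℝ (Fin d)) 1))
    (V : ℝ≥0∞) (hV : ∀ j, volume (cap δ (v j)) = V)
    (ε : ℝ) (hε : 0 < ε)
    (hnV : ENNReal.ofReal (8 * ε) * volume (closedBall (0 : EuclideanSpace ℝ (Fin d)) 1) ≤
      n * V)
    (x : Fin n → Bool) (Kt : Set (EuclideanSpace ℝ (Fin d))) (hKtm : MeasurableSet Kt)
    (hclose : volume (Kt ∆ capBody δ v x) ≤
      ENNReal.ofReal ε * volume (closedBall (0 : EuclideanSpace ℝ (Fin d)) 1))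
    (z : Fin n → Bool)
    (hz : ∀ y : Fin n → Bool, volume (Kt ∆ capBody δ v z) ≤ volume (Kt ∆ capBody δ v y)) :
    ((Finset.univ.filter fun j => x j ≠ z j).card : ℝ) ≤ (n : ℝ) / 4 := by
  set Γ := volume (closedBall (0 : EuclideanSpace ℝ (Fin d)) 1) with hΓ
  -- unit norms of net points
  have hnorm : ∀ j, ‖v j‖ = 1 := fun j => by
    have := hnet.1 (mem_range_self j)
    simpa [mem_sphere_zero_iff_norm] using this
  -- uniqueness of the cap containing a point
  have huniq : ∀ (j k : Fin n) (pt : EuclideanSpace ℝ (Fin d)),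
      pt ∈ cap δ (v j) → pt ∈ cap δ (v k) → j = k := by
    intro j k pt hj hk
    by_contra hne
    have hvne : v j ≠ v k := fun h => hne (hinj h)
    have hd1 : δ ≤ dist (v j) (v k) :=
      hnet.2.1 (v j) (mem_range_self j) (v k) (mem_range_self k) hvne
    have h1 := cap_close hδ0 (hnorm j) hj
    have h2 := cap_close hδ0 (hnorm k) hk
    have : dist (v j) (v k) < δ := by
      calc dist (v j) (v k) ≤ dist (v j) pt + dist pt (v k) := dist_triangle _ _ _
        _ < δ / 2 + δ / 2 := by
            rw [dist_comm (v j) pt]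
            exact add_lt_add (by simpa [dist_eq_norm] using h1)
              (by simpa [dist_eq_norm] using h2)
        _ = δ := by ring
    linarith
  -- the symmetric difference of two cap bodies
  have hsd : capBody δ v x ∆ capBody δ v z
      = ⋃ j ∈ ((Finset.univ.filter fun j => x j ≠ z j) : Finset (Fin n)), cap δ (v j) := by
    ext pt
    simp only [mem_symmDiff, capBody, capBase, mem_union, mem_diff, mem_iUnion,
      mem_setOf_eq, not_or, not_exists, not_and, exists_prop, Finset.mem_filter,
      Finset.mem_univ, true_and, ne_eq]
    constructor
    · rintro (⟨h1, h2, h3⟩ | ⟨h1, h2, h3⟩)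
      · rcases h1 with ⟨hb, hnc⟩ | ⟨j, hxj, hcj⟩
        · exact absurd hnc (h2 hb)
        · refine ⟨j, ?_, hcj⟩
          intro hxz
          exact h3 j (hxz ▸ hxj) hcj
      · rcases h1 with ⟨hb, hnc⟩ | ⟨j, hzj, hcj⟩
        · exact absurd hnc (h2 hb)
        · refine ⟨j, ?_, hcj⟩
          intro hxz
          exact h3 j (hxz ▸ hzj) hcj
    · rintro ⟨j, hne, hcj⟩
      have hnb : pt ∈ closedBall (0:EuclideanSpace ℝ (Fin d)) 1 →
          ¬∀ k, pt ∉ cap δ (v k) := fun _ h => h j hcj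
      by_cases hxj : x j = true
      · have hzj : z j = false := by
          cases hzz : z j with
          | false => rfl
          | true => exact absurd (hxj.trans hzz.symm) hne
        refine Or.inl ⟨Or.inr ⟨j, hxj, hcj⟩, hnb, ?_⟩
        intro k hk hck
        have := huniq k j pt hck hcj
        subst this
        rw [hk] at hzj
        exact Bool.noConfusion hzj
      · have hxj' : x j = false := by
          cases hxx : x j with
          | false => rfl
          | true => exact absurd hxx hxj
        have hzj : z j = true := by
          cases hzz : z j with
          | false => exact absurd (hxj'.trans hzz.symm) hne
          | true => rfl
        refine Or.inr ⟨Or.inr ⟨j, hzj, hcj⟩, hnb, ?_⟩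
        intro k hk hck
        have := huniq k j pt hck hcj
        subst this
        rw [hk] at hxj'
        exact Bool.noConfusion hxj'
  -- volume of the symmetric difference
  set F := (Finset.univ.filter fun j => x j ≠ z j) with hF
  have hvol : volume (capBody δ v x ∆ capBody δ v z) = (F.card : ℝ≥0∞) * V := by
    rw [hsd]
    rw [measure_biUnion_finset ?_ (fun j _ => measurableSet_cap' δ (v j))]
    · rw [Finset.sum_congr rfl (fun j _ => hV j), Finset.sum_const, nsmul_eq_mul]
    · intro j _ k _ hjk
      refine Set.disjoint_left.mpr fun pt hj hk => hjk (huniq j k pt hj hk)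
  -- Γ facts
  have hΓ0 : Γ ≠ 0 := (measure_closedBall_pos volume 0 one_pos).ne'
  have hΓtop : Γ ≠ ⊤ := measure_closedBall_lt_top.ne
  -- V facts
  have hVle : V ≤ Γ := by
    rcases Nat.eq_zero_or_pos n with hn | hn
    · -- if n = 0 then hnV gives a contradiction
      exfalso
      rw [hn] at hnV
      simp only [Nat.cast_zero, zero_mul, nonpos_iff_eq_zero, mul_eq_zero] at hnV
      rcases hnV with h | h
      · exact (ENNReal.ofReal_pos.mpr (by linarith)).ne' h
      · exact hΓ0 h
    · obtain ⟨j⟩ := Fin.pos_iff_nonempty.mp hn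
      rw [← hV j]
      exact measure_mono (cap_subset_ball' δ (v j))
  have hVtop : V ≠ ⊤ := (lt_of_le_of_lt hVle (lt_of_le_of_ne le_top hΓtop)).ne
  have hV0 : V ≠ 0 := by
    intro h0
    rw [h0, mul_zero] at hnV
    simp only [nonpos_iff_eq_zero, mul_eq_zero] at hnV
    rcases hnV with h | h
    · exact (ENNReal.ofReal_pos.mpr (by linarith)).ne' h
    · exact hΓ0 h
  -- main estimate
  have hzx : volume (Kt ∆ capBody δ v z) ≤ ENNReal.ofReal ε * Γ := le_trans (hz x) hclose
  have hkey : (F.card : ℝ≥0∞) * V ≤ 2 * (ENNReal.ofReal ε * Γ) := by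
    rw [← hvol]
    calc volume (capBody δ v x ∆ capBody δ v z)
        ≤ volume (capBody δ v x ∆ Kt) + volume (Kt ∆ capBody δ v z) :=
          measure_symmDiff_le _ _ _
      _ = volume (Kt ∆ capBody δ v x) + volume (Kt ∆ capBody δ v z) := by
          rw [symmDiff_comm]
      _ ≤ ENNReal.ofReal ε * Γ + ENNReal.ofReal ε * Γ := add_le_add hclose hzx
      _ = 2 * (ENNReal.ofReal ε * Γ) := by ring
  have h4 : (4 * F.card : ℝ≥0∞) * V ≤ (n : ℝ≥0∞) * V := by
    calc (4 * F.card : ℝ≥0∞) * V = 4 * ((F.card : ℝ≥0∞) * V) := by ring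
      _ ≤ 4 * (2 * (ENNReal.ofReal ε * Γ)) := by
          exact mul_le_mul_right hkey 4
      _ = ENNReal.ofReal (8 * ε) * Γ := by
          rw [ENNReal.ofReal_mul (by norm_num : (0:ℝ) ≤ 8)]
          norm_num
          ring
      _ ≤ (n : ℝ≥0∞) * V := hnV
  have h5 : (4 * F.card : ℝ≥0∞) ≤ (n : ℝ≥0∞) :=
    (ENNReal.mul_le_mul_iff_left hV0 hVtop).mp h4
  have h6 : (4 * F.card : ℕ) ≤ n := by
    have : ((4 * F.card : ℕ) : ℝ≥0∞) ≤ ((n : ℕ) : ℝ≥0∞) := by push_cast; exact h5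
    exact_mod_cast this
  have h7 : (4 * F.card : ℝ) ≤ (n : ℝ) := by exact_mod_cast h6
  linarith
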